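/- Let f : A → B be a cofibration of pretypes and p : X → Y a fibration. Then the induced gap map (B → X) → (B → Y) ×_{(A → Y)} (A → X) is a fibration. -/

import Mathlib

/-- The data of a two-level type theory (over Lean's strict layer, where
strict equality is `Eq` and strict isomorphism is `Equiv`): a fibrancy
predicate on pretypes, fibrant identity types with their elimination rule
into fibrant families, and closure of fibrant types under `Π` and `Σ`. -/
structure TLTT : Type 1 where
  Fib : Type → Prop
  Id : (A : Type) → A → A → Type
  idRefl : {A : Type} → (a : A) → Id A a a
  fibId : ∀ {A : Type}, Fib A → ∀ a b : A, Fib (Id A a b)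
  idElim : {A : Type} → (a : A) → (P : (b : A) → Id A a b → Type) →
    (∀ b p, Fib (P b p)) → P a (idRefl a) → ∀ b p, P b p
  idComp : ∀ {A : Type} (a : A) (P : (b : A) → Id A a b → Type)
      (hP : ∀ b p, Fib (P b p)) (d : P a (idRefl a)),
      idElim a P hP d a (idRefl a) = d
  fibUnit : Fib PUnit
  fibPi : ∀ {A : Type} {B : A → Type}, Fib A → (∀ a, Fib (B a)) → Fib (∀ a, B a)
  fibSigma : ∀ {A : Type} {B : A → Type}, Fib A → (∀ a, Fib (B a)) → Fib (Σ a, B a)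

namespace TwoLevel

/-- A pretype is essentially fibrant if it is strictly isomorphic to a fibrant type. -/
def EssFib (T : TLTT) (A : Type) : Prop := ∃ B : Type, T.Fib B ∧ Nonempty (A ≃ B)

/-- A pretype is finite if it is strictly isomorphic to some `Fin n`. -/
def IsFinite (A : Type) : Prop := ∃ n : ℕ, Nonempty (A ≃ Fin n)

/-- A map is a fibration if all of its strict fibres are essentially fibrant. -/
def IsFibration (T : TLTT) {E B : Type} (p : E → B) : Prop :=
  ∀ b : B, EssFib T { e : E // p e = b }

/-- Homotopy equivalence of pretypes with respect to the fibrant identity type. -/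
def IsHEquiv (T : TLTT) {A B : Type} (f : A → B) : Prop :=
  ∃ g : B → A, (∀ a, Nonempty (T.Id A (g (f a)) a)) ∧ (∀ b, Nonempty (T.Id B (f (g b)) b))

/-- A pretype is cofibrant if exponentiating out of it preserves fibrations. -/
def Cofibrant (T : TLTT) (A : Type) : Prop :=
  ∀ {X Y : Type} (p : X → Y), IsFibration T p → IsFibration T (fun g : A → X => p ∘ g)

/-- A cofibration is a complemented monomorphism with cofibrant complement. -/
def IsCofibration (T : TLTT) {A B : Type} (f : A → B) : Prop :=
  ∃ Ac : Type, Cofibrant T Ac ∧ ∃ g : Ac → B, Function.Bijective (Sum.elim f g)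

end TwoLevel
/-- Strict categories: categorical laws hold up to strict equality. -/
structure SCat : Type 1 where
  Obj : Type
  Hom : Obj → Obj → Type
  id : ∀ x, Hom x x
  comp : ∀ {x y z}, Hom y z → Hom x y → Hom x z
  id_comp : ∀ {x y} (f : Hom x y), comp (id y) f = f
  comp_id : ∀ {x y} (f : Hom x y), comp f (id x) = f
  assoc : ∀ {w x y z} (h : Hom y z) (g : Hom x y) (f : Hom w x),
    comp (comp h g) f = comp h (comp g f)

/-- Strict (pretype-valued) diagrams on a strict category. -/
structure SFunctor (C : SCat) : Type 1 where
  obj : C.Obj → Type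
  map : ∀ {x y}, C.Hom x y → obj x → obj y
  map_id : ∀ {x} (a : obj x), map (C.id x) a = a
  map_comp : ∀ {x y z} (g : C.Hom y z) (f : C.Hom x y) (a : obj x),
    map g (map f a) = map (C.comp g f) a

/-- Strict natural transformations of diagrams. -/
structure SNat {C : SCat} (X Y : SFunctor C) : Type where
  app : ∀ i, X.obj i → Y.obj i
  nat : ∀ {i j} (f : C.Hom i j) (a : X.obj i), Y.map f (app i a) = app j (X.map f a)

theorem SNat.ext' {C : SCat} {X Y : SFunctor C} {f g : SNat X Y}
    (h : f.app = g.app) : f = g := by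
  cases f; cases g; cases h; rfl

/-- Composition of natural transformations. -/
def natComp {C : SCat} {X Y Z : SFunctor C} (g : SNat Y Z) (f : SNat X Y) : SNat X Z :=
  ⟨fun i a => g.app i (f.app i a), by intro i j u a; rw [g.nat, f.nat]⟩

/-- The (strict) limit of a diagram, realised as the pretype of cones with tip `1`. -/
def SLimit (C : SCat) (X : SFunctor C) : Type :=
  { c : ∀ i, X.obj i // ∀ ⦃i j⦄ (f : C.Hom i j), X.map f (c i) = c j }

/-- The constant diagram. -/
def constF (C : SCat) (A : Type) : SFunctor C :=
  ⟨fun _ => A, fun _ a => a, fun _ => rfl, fun _ _ _ => rfl⟩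

/-- `f` is not an identity morphism. -/
def NotId (C : SCat) {x y : C.Obj} (f : C.Hom x y) : Prop :=
  ¬ ∃ _h : x = y, HEq f (C.id x)

/-- Objects of the reduced coslice `z ⫽ C`. -/
def RedCoslice (C : SCat) (z : C.Obj) : Type :=
  Σ y : C.Obj, { f : C.Hom z y // NotId C f }

/-- The reduced coslice category `z ⫽ C`. -/
def RedCosliceCat (C : SCat) (z : C.Obj) : SCat where
  Obj := RedCoslice C z
  Hom w w' := { h : C.Hom w.1 w'.1 // C.comp h w.2.1 = w'.2.1 }
  id w := ⟨C.id w.1, C.id_comp _⟩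
  comp h g := ⟨C.comp h.1 g.1, by rw [C.assoc, g.2, h.2]⟩
  id_comp f := Subtype.ext (C.id_comp _)
  comp_id f := Subtype.ext (C.comp_id _)
  assoc h g f := Subtype.ext (C.assoc _ _ _)

/-- Restriction of a diagram along the forgetful functor `z ⫽ C → C`. -/
def restrictRC {C : SCat} (X : SFunctor C) (z : C.Obj) : SFunctor (RedCosliceCat C z) where
  obj w := X.obj w.1
  map h a := X.map h.1 a
  map_id a := X.map_id a
  map_comp g f a := X.map_comp g.1 f.1 a

/-- The matching object `M_z^X`: the limit of `X` over the reduced coslice. -/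
def Matching {C : SCat} (X : SFunctor C) (z : C.Obj) : Type :=
  SLimit (RedCosliceCat C z) (restrictRC X z)

/-- The canonical map `X_z → M_z^X`. -/
def canMatch {C : SCat} (X : SFunctor C) (z : C.Obj) (x : X.obj z) : Matching X z :=
  ⟨fun w => X.map w.2.1 x, by
    intro w w' h
    exact (X.map_comp h.1 w.2.1 x).trans (by rw [h.2])⟩

/-- A diagram is Reedy fibrant if each canonical map `X_z → M_z^X` is a fibration. -/
def ReedyFibrant (T : TLTT) {C : SCat} (X : SFunctor C) : Prop :=
  ∀ z, TwoLevel.IsFibration T (canMatch X z)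

/-- The map induced on matching objects by a natural transformation. -/
def matchNat {C : SCat} {X Y : SFunctor C} (p : SNat X Y) (z : C.Obj) :
    Matching X z → Matching Y z :=
  fun c => ⟨fun w => p.app w.1 (c.1 w), by
    intro w w' h
    exact (p.nat h.1 (c.1 w)).trans (congrArg (p.app w'.1) (c.2 h))⟩

/-- The relative matching map `X_n → M_n^X ×_{M_n^Y} Y_n` of `p : X → Y`. -/
def relMatchMap {C : SCat} {X Y : SFunctor C} (p : SNat X Y) (n : C.Obj) :
    X.obj n → { q : Matching X n × Y.obj n // matchNat p n q.1 = canMatch Y n q.2 } :=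
  fun x => ⟨(canMatch X n x, p.app n x), by
    apply Subtype.ext
    funext w
    exact (p.nat w.2.1 x).symm⟩

/-- A natural transformation is a Reedy fibration if all of its relative matching
maps are fibrations. -/
def IsReedyFibration (T : TLTT) {C : SCat} {X Y : SFunctor C} (p : SNat X Y) : Prop :=
  ∀ n, TwoLevel.IsFibration T (relMatchMap p n)

/-- An inverse category: a strict category with a rank function such that every
morphism either strictly decreases the rank or is an identity. -/
def IsInverse (C : SCat) : Prop :=
  ∃ φ : C.Obj → ℕ, ∀ ⦃x y⦄ (f : C.Hom x y), φ x > φ y ∨ ∃ h : x = y, HEq f (C.id x)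

/-- The map induced on limits by a natural transformation. -/
def limMap {C : SCat} {X Y : SFunctor C} (p : SNat X Y) : SLimit C X → SLimit C Y :=
  fun c => ⟨fun i => p.app i (c.1 i), by
    intro i j f
    exact (p.nat f (c.1 i)).trans (congrArg (p.app j) (c.2 f))⟩

/-- An inverse category is admissible if Reedy fibrant diagrams over all of its
reduced coslices have essentially fibrant limits. -/
def Admissible (T : TLTT) (C : SCat) : Prop :=
  ∀ (z : C.Obj) (Y : SFunctor (RedCosliceCat C z)), ReedyFibrant T Y →
    TwoLevel.EssFib T (SLimit (RedCosliceCat C z) Y)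

/-- The pullback of diagrams `A ×_B X` along `f : A → B` and `p : X → B`,
computed pointwise. -/
def pbFunctor {C : SCat} {A B X : SFunctor C} (f : SNat A B) (p : SNat X B) :
    SFunctor C where
  obj i := { z : A.obj i × X.obj i // f.app i z.1 = p.app i z.2 }
  map g z := ⟨(A.map g z.1.1, X.map g z.1.2), by rw [← f.nat, ← p.nat, z.2]⟩
  map_id z := by
    apply Subtype.ext
    exact Prod.ext (A.map_id _) (X.map_id _)
  map_comp g h z := by
    apply Subtype.ext
    exact Prod.ext (A.map_comp _ _ _) (X.map_comp _ _ _)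

/-- Projection from the pullback of diagrams to the base. -/
def pbProj {C : SCat} {A B X : SFunctor C} (f : SNat A B) (p : SNat X B) :
    SNat (pbFunctor f p) A :=
  ⟨fun _ z => z.1.1, fun _ _ => rfl⟩

/-- A pushout square of diagrams, via its universal property. -/
def IsPushout {C : SCat} {P A B Q : SFunctor C} (f : SNat P A) (g : SNat P B)
    (ia : SNat A Q) (ib : SNat B Q) : Prop :=
  natComp ia f = natComp ib g ∧
  ∀ (W : SFunctor C) (u : SNat A W) (v : SNat B W),
    natComp u f = natComp v g → ∃! w : SNat Q W, natComp w ia = u ∧ natComp w ib = v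
/-- Hom-pretypes of the category `C* = 1 ⋆ C` obtained by freely adjoining an
initial object `none`. -/
def OHom (C : SCat) : Option C.Obj → Option C.Obj → Type
  | none, _ => PUnit
  | some _, none => Empty
  | some a, some b => C.Hom a b

def oid (C : SCat) : ∀ x : Option C.Obj, OHom C x x
  | none => PUnit.unit
  | some a => C.id a

def ocomp (C : SCat) : ∀ {x y z : Option C.Obj}, OHom C y z → OHom C x y → OHom C x z
  | none, _, _, _, _ => PUnit.unit
  | some _, none, _, _, f => f.elim
  | some _, some _, none, g, _ => g.elim
  | some _, some _, some _, g, f => C.comp g f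

/-- The category `C* = 1 ⋆ C`. -/
def CStar (C : SCat) : SCat where
  Obj := Option C.Obj
  Hom := OHom C
  id := oid C
  comp := ocomp C
  id_comp {x y} f := by
    cases x <;> cases y
    · rfl
    · rfl
    · exact f.elim
    · exact C.id_comp f
  comp_id {x y} f := by
    cases x <;> cases y
    · rfl
    · rfl
    · exact f.elim
    · exact C.comp_id f
  assoc {w x y z} h g f := by
    cases w <;> cases x <;> cases y <;> cases z <;>
      first
        | rfl
        | exact f.elim
        | exact g.elim
        | exact h.elim
        | exact C.assoc h g f

/-- Restriction of a diagram on `C*` to `C`. -/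
def restrictC {C : SCat} (X : SFunctor (CStar C)) : SFunctor C where
  obj i := X.obj (some i)
  map {i j} f a := X.map (x := some i) (y := some j) f a
  map_id a := X.map_id a
  map_comp g f a := X.map_comp (x := some _) (y := some _) (z := some _) g f a

/-- Restriction of a natural transformation of diagrams on `C*` to `C`. -/
def restrictNat {C : SCat} {F G : SFunctor (CStar C)} (η : SNat F G) :
    SNat (restrictC F) (restrictC G) :=
  ⟨fun i a => η.app (some i) a, fun f a => η.nat (i := some _) (j := some _) f a⟩

/-- The canonical map `X(*) → lim_C X`. -/
def canLim {C : SCat} (X : SFunctor (CStar C)) : X.obj none → SLimit C (restrictC X) :=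
  fun x => ⟨fun i => X.map (x := none) (y := some i) PUnit.unit x, by
    intro i j f
    exact X.map_comp (x := none) (y := some i) (z := some j) f PUnit.unit x⟩
/-- The product of a diagram `F` with the Yoneda (corepresentable) diagram `C(d, −)`. -/
def yonProd {C : SCat} (F : SFunctor C) (d : C.Obj) : SFunctor C where
  obj c := F.obj c × C.Hom d c
  map f z := (F.map f z.1, C.comp f z.2)
  map_id z := by
    obtain ⟨a, g⟩ := z
    show (F.map (C.id _) a, C.comp (C.id _) g) = (a, g)
    rw [F.map_id, C.id_comp]
  map_comp g f z := by
    obtain ⟨a, u⟩ := z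
    show (F.map g (F.map f a), C.comp g (C.comp f u)) = (F.map (C.comp g f) a, C.comp (C.comp g f) u)
    rw [F.map_comp, C.assoc]

/-- The exponential diagram `[F, X]`, defined via Yoneda:
`[F, X](d) = Nat(F × C(d,−), X)`. -/
def expF {C : SCat} (F X : SFunctor C) : SFunctor C where
  obj d := SNat (yonProd F d) X
  map {d d'} h η :=
    ⟨fun c z => η.app c (z.1, C.comp z.2 h), by
      intro c c' f z
      refine (η.nat f (z.1, C.comp z.2 h)).trans ?_
      show η.app c' (F.map f z.1, C.comp f (C.comp z.2 h)) = η.app c' (F.map f z.1, C.comp (C.comp f z.2) h)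
      rw [C.assoc]⟩
  map_id {d} η := by
    apply SNat.ext'
    funext c z
    show η.app c (z.1, C.comp z.2 (C.id d)) = η.app c z
    rw [C.comp_id]
    rfl
  map_comp g f η := by
    apply SNat.ext'
    funext c z
    show η.app c (z.1, C.comp (C.comp z.2 g) f) = η.app c (z.1, C.comp z.2 (C.comp g f))
    rw [C.assoc]

/-- Whiskering a natural transformation with the Yoneda factor. -/
def prodWhisker {C : SCat} {F G : SFunctor C} (τ : SNat F G) (d : C.Obj) :
    SNat (yonProd F d) (yonProd G d) :=
  ⟨fun c z => (τ.app c z.1, z.2), by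
    intro c c' f z
    show (G.map f (τ.app c z.1), C.comp f z.2) = (τ.app c' (F.map f z.1), C.comp f z.2)
    rw [τ.nat]⟩

/-- The natural transformation `(− ∘ τ) : [G, X] → [F, X]` induced on exponentials
by precomposition with `τ : F → G`. -/
def expMap {C : SCat} {F G : SFunctor C} (τ : SNat F G) (X : SFunctor C) :
    SNat (expF G X) (expF F X) :=
  ⟨fun d η => natComp η (prodWhisker τ d), fun _ _ => SNat.ext' rfl⟩
/-- Morphisms `[m] → [k]` of the semi-simplex category `Δ₊ᵒᵖ`:
strictly monotone maps `Fin (k+1) → Fin (m+1)`. -/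
def DeltaHom (m k : ℕ) : Type := { f : Fin (k+1) → Fin (m+1) // StrictMono f }

/-- The semi-simplex category `Δ₊ᵒᵖ`. -/
@[reducible] def DeltaOp : SCat where
  Obj := ℕ
  Hom := DeltaHom
  id _ := ⟨_root_.id, strictMono_id⟩
  comp g f := ⟨f.1 ∘ g.1, f.2.comp g.2⟩
  id_comp _ := Subtype.ext rfl
  comp_id _ := Subtype.ext rfl
  assoc _ _ _ := Subtype.ext rfl

/-- A semi-simplicial set/type is a diagram on `Δ₊ᵒᵖ`. -/
abbrev SSDiagram : Type 1 := SFunctor DeltaOp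

theorem strictMono_fin_le {a b : ℕ} (g : Fin a → Fin b) (hg : StrictMono g) : a ≤ b := by
  simpa using Fintype.card_le_of_injective g hg.injective

set_option linter.deprecated false in
theorem strictMono_fin_id {a : ℕ} (g : Fin a → Fin a) (hg : StrictMono g) :
    ∀ i, g i = i := by
  have hsur : Function.Surjective g := Finite.injective_iff_surjective.mp hg.injective
  have hid : g = fun i => i := by
    apply (hg.range_inj strictMono_id).mp
    rw [Set.range_id]
    exact Set.range_eq_univ.mpr hsur
  intro i; rw [hid]

/-- A subfunctor of the Yoneda (representable) semi-simplicial set `Δ^n`,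
given by a family of propositions closed under the functorial action. -/
structure SubP (n : ℕ) : Type where
  mem : ∀ k : ℕ, DeltaHom n k → Prop
  closed : ∀ ⦃k l : ℕ⦄ (g : DeltaHom k l) (f : DeltaHom n k),
    mem k f → mem l (DeltaOp.comp g f)

/-- The semi-simplicial set associated to a subfunctor of `Δ^n`. -/
def SubP.toF {n : ℕ} (S : SubP n) : SSDiagram where
  obj k := { f : DeltaHom n k // S.mem k f }
  map g f := ⟨DeltaOp.comp g f.1, S.closed g f.1 f.2⟩
  map_id _ := Subtype.ext (DeltaOp.id_comp _)
  map_comp _ _ _ := Subtype.ext (DeltaOp.assoc _ _ _).symm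

def SubP.le {n : ℕ} (S S' : SubP n) : Prop := ∀ k f, S.mem k f → S'.mem k f

/-- The inclusion of sub-semi-simplicial sets. -/
def SubP.incl {n : ℕ} {S S' : SubP n} (h : S.le S') : SNat S.toF S'.toF :=
  ⟨fun k f => ⟨f.1, h k f.1 f.2⟩, fun _ _ => rfl⟩

/-- The full subfunctor, i.e. the representable `Δ^n` itself. -/
def fullSub (n : ℕ) : SubP n := ⟨fun _ _ => True, by intros; trivial⟩

/-- The membership predicate of the spine `Sp^n`: all vertices, together with
the consecutive edges `i → i+1`. -/
def spineMem (n : ℕ) : ∀ k : ℕ, DeltaHom n k → Prop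
  | 0, _ => True
  | 1, f => (f.1 1 : ℕ) = (f.1 0 : ℕ) + 1
  | _ + 2, _ => False

/-- The spine `Sp^n` as a subfunctor of `Δ^n`. -/
def spineSub (n : ℕ) : SubP n where
  mem := spineMem n
  closed := by
    intro k l g f hf
    have hlk : l + 1 ≤ k + 1 := strictMono_fin_le g.1 g.2
    rcases l with _ | _ | l
    · trivial
    · rcases k with _ | _ | k
      · exact absurd hlk (by omega)
      · show ((f.1 (g.1 1) : Fin (n+1)) : ℕ) = ((f.1 (g.1 0) : Fin (n+1)) : ℕ) + 1
        have h0 : g.1 0 = 0 := strictMono_fin_id g.1 g.2 0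
        have h1 : g.1 1 = 1 := strictMono_fin_id g.1 g.2 1
        rw [h0, h1]
        exact hf
      · exact hf.elim
    · rcases k with _ | _ | k
      · exact absurd hlk (by omega)
      · exact absurd hlk (by omega)
      · exact hf.elim

/-- The membership predicate of the horn `Λ^n_k`: everything except the top cell
and the `k`-th face (the strictly monotone map skipping the value `k`,
described numerically). -/
def hornMem (n k : ℕ) (m : ℕ) (f : DeltaHom n m) : Prop :=
  if m = n then False
  else if m + 1 = n then
    ¬ (∀ i : Fin (m + 1), (f.1 i : ℕ) = if (i : ℕ) < k then (i : ℕ) else (i : ℕ) + 1)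
  else True

/-- The horn `Λ^n_k` as a subfunctor of `Δ^n`. -/
def hornSub (n k : ℕ) : SubP n where
  mem := hornMem n k
  closed := by
    intro m l g f hf
    have hlm : l + 1 ≤ m + 1 := strictMono_fin_le g.1 g.2
    have hmn : m + 1 ≤ n + 1 := strictMono_fin_le f.1 f.2
    unfold hornMem at hf ⊢
    by_cases hl : l = n
    · rw [if_pos hl]
      have hm : m = n := by omega
      rw [if_pos hm] at hf
      exact hf
    · rw [if_neg hl]
      by_cases hl1 : l + 1 = n
      · rw [if_pos hl1]
        by_cases hm : m = n
        · rw [if_pos hm] at hf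
          exact hf.elim
        · have hm1 : m + 1 = n := by omega
          rw [if_neg hm, if_pos hm1] at hf
          intro hs
          apply hf
          intro i
          have hml : m = l := by omega
          subst hml
          have hgi : g.1 i = i := strictMono_fin_id g.1 g.2 i
          have h2 : ((f.1 (g.1 i) : Fin (n+1)) : ℕ) =
              if (i : ℕ) < k then (i : ℕ) else (i : ℕ) + 1 := hs i
          rw [hgi] at h2
          exact h2
      · rw [if_neg hl1]
        trivial

/-- The spine is contained in `Δ^n`. -/
theorem spine_le_full (n : ℕ) : (spineSub n).le (fullSub n) := fun _ _ _ => trivial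

/-- The horn is contained in `Δ^n`. -/
theorem horn_le_full (n k : ℕ) : (hornSub n k).le (fullSub n) := fun _ _ _ => trivial

/-- The two vertex inclusions of an edge. -/
def V0 : DeltaHom 1 0 :=
  ⟨fun _ => 0, by
    intro a b hab
    exfalso
    have ha := a.isLt
    have hb := b.isLt
    rw [Fin.lt_def] at hab
    omega⟩

def V1 : DeltaHom 1 0 :=
  ⟨fun _ => 1, by
    intro a b hab
    exfalso
    have ha := a.isLt
    have hb := b.isLt
    rw [Fin.lt_def] at hab
    omega⟩

/-- The three faces of a 2-simplex: `Dface j` skips the vertex `j`. -/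
def Dface (j : Fin 3) : DeltaHom 2 1 := ⟨Fin.succAbove j, Fin.strictMono_succAbove j⟩

/-- The fibre of `X₁` over a pair of vertices: edges from `a` to `b`. -/
def EdgeT (X : SSDiagram) (a b : X.obj 0) : Type :=
  { e : X.obj 1 // X.map (x := 1) (y := 0) V0 e = a ∧ X.map (x := 1) (y := 0) V1 e = b }

/-- The fibre of `X₂` over a boundary triangle `(f, g, h)`. -/
def TriT (X : SSDiagram) {a b c : X.obj 0}
    (f : EdgeT X a b) (g : EdgeT X b c) (h : EdgeT X a c) : Type :=
  { t : X.obj 2 // X.map (x := 2) (y := 1) (Dface 2) t = f.1 ∧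
      X.map (x := 2) (y := 1) (Dface 0) t = g.1 ∧ X.map (x := 2) (y := 1) (Dface 1) t = h.1 }

/-- The Segal condition: locality with respect to all spine inclusions. -/
def SegalCondition (T : TLTT) (X : SSDiagram) : Prop :=
  ∀ n : ℕ, TwoLevel.IsHEquiv T
    (fun η : SNat (fullSub n).toF X => natComp η (SubP.incl (spine_le_full n)))
/-- The type of homotopy equivalences (with respect to the fibrant identity
type) between two pretypes. -/
def HEquivT (T : TLTT) (A B : Type) : Type :=
  Σ f : A → B, Σ g : B → A, (∀ a, T.Id A (g (f a)) a) × (∀ b, T.Id B (f (g b)) b)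

/-- The identity equivalence. -/
def idEquivT (T : TLTT) (A : Type) : HEquivT T A A :=
  ⟨_root_.id, _root_.id, fun a => T.idRefl a, fun b => T.idRefl b⟩

/-!
Writing `B` as the strict coproduct `A +ˢ Aᶜ`, a map `h : B → X` is the same as the pair
`(h ∘ f, h ∘ g)`. In the fibre of the gap map over a compatible pair `(k, a)` the first
component is pinned to `a`, and the compatibility `p ∘ a = k ∘ f` makes the condition
`p ∘ h = k` collapse to `p ∘ (h ∘ g) = k ∘ g`. So that fibre is strictly isomorphic to the fibre
of `p ∘ - : (Aᶜ → X) → (Aᶜ → Y)` over `k ∘ g`, which is essentially fibrant by cofibrancy of `Aᶜ`.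
-/

namespace TwoLevel

theorem EssFib.of_equiv {T : TLTT} {A B : Type} (hA : EssFib T A) (e : B ≃ A) :
    EssFib T B :=
  let ⟨C, hC, ⟨e'⟩⟩ := hA
  ⟨C, hC, ⟨e.trans e'⟩⟩

end TwoLevel

noncomputable def Equiv.arrowProdOfBijectiveSumElim {A Ac B : Type*} {f : A → B} {g : Ac → B}
    (hfg : Function.Bijective (Sum.elim f g)) (X : Type*) : (B → X) ≃ (A → X) × (Ac → X) :=
  (Equiv.arrowCongr (Equiv.ofBijective _ hfg).symm (Equiv.refl X)).trans
    (Equiv.sumArrowEquivProdArrow A Ac X)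

@[simp]
theorem Equiv.arrowProdOfBijectiveSumElim_apply {A Ac B : Type*} {f : A → B} {g : Ac → B}
    (hfg : Function.Bijective (Sum.elim f g)) {X : Type*} (h : B → X) :
    Equiv.arrowProdOfBijectiveSumElim hfg X h = (h ∘ f, h ∘ g) :=
  rfl

theorem Function.Bijective.sumElim_comp_eq_iff {A Ac B X : Type*} {f : A → B} {g : Ac → B}
    (hfg : Function.Bijective (Sum.elim f g)) {u v : B → X} :
    u = v ↔ u ∘ f = v ∘ f ∧ u ∘ g = v ∘ g := by
  rw [← (Equiv.arrowProdOfBijectiveSumElim hfg X).apply_eq_iff_eq,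
    Equiv.arrowProdOfBijectiveSumElim_apply, Equiv.arrowProdOfBijectiveSumElim_apply,
    Prod.mk.injEq]

def Equiv.subtypeProdFstEq {α β : Type*} (a : α) (P : β → Prop) :
    { x : α × β // x.1 = a ∧ P x.2 } ≃ { b // P b } where
  toFun x := ⟨x.1.2, x.2.2⟩
  invFun b := ⟨(a, b.1), rfl, b.2⟩
  left_inv := by rintro ⟨⟨_, b⟩, rfl, _⟩; rfl
  right_inv _ := rfl

section Gap

variable {A Ac B X Y : Type*} {f : A → B} {g : Ac → B}

def gap (f : A → B) (p : X → Y) (h : B → X) :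
    { q : (B → Y) × (A → X) // p ∘ q.2 = q.1 ∘ f } :=
  ⟨(p ∘ h, h ∘ f), rfl⟩

theorem gap_eq_mk_iff (hfg : Function.Bijective (Sum.elim f g)) (p : X → Y) {k : B → Y}
    {a : A → X} (hq : p ∘ a = k ∘ f) (h : B → X) :
    gap f p h = ⟨(k, a), hq⟩ ↔ h ∘ f = a ∧ p ∘ (h ∘ g) = k ∘ g := by
  rw [gap, Subtype.mk.injEq, Prod.mk.injEq, hfg.sumElim_comp_eq_iff]
  constructor
  · rintro ⟨⟨-, hg⟩, hf⟩
    exact ⟨hf, hg⟩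
  · rintro ⟨hf, hg⟩
    refine ⟨⟨?_, hg⟩, hf⟩
    rw [← hq, ← hf]
    rfl

noncomputable def gapFiberEquiv (hfg : Function.Bijective (Sum.elim f g)) (p : X → Y)
    {k : B → Y} {a : A → X} (hq : p ∘ a = k ∘ f) :
    { h : B → X // gap f p h = ⟨(k, a), hq⟩ } ≃ { m : Ac → X // p ∘ m = k ∘ g } :=
  (Equiv.subtypeEquiv (Equiv.arrowProdOfBijectiveSumElim hfg X) (gap_eq_mk_iff hfg p hq)).trans
    (Equiv.subtypeProdFstEq a fun m => p ∘ m = k ∘ g)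

end Gap

/-- the pullback-hom (gap) map of a cofibration against a
fibration is a fibration. -/
theorem cofibration_fibration_gap (T : TLTT) {A B X Y : Type} (f : A → B)
    (hf : TwoLevel.IsCofibration T f) (p : X → Y) (hp : TwoLevel.IsFibration T p) :
    TwoLevel.IsFibration T (fun h : B → X =>
      (⟨(p ∘ h, h ∘ f), rfl⟩ : { q : (B → Y) × (A → X) // p ∘ q.2 = q.1 ∘ f })) := by
  obtain ⟨Ac, hAc, g, hfg⟩ := hf
  rintro ⟨⟨k, a⟩, hq⟩
  exact (hAc p hp (k ∘ g)).of_equiv (gapFiberEquiv hfg p hq)
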